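/- Let G be an infinite, connected simple graph with vertex-degrees bounded by some finite Δ, let μ = lim_{n→∞} (sup_v σ_n(v))^{1/n}, and write ulμ(w) = liminf_{n→∞} σ_n(w)^{1/n}. Then for any two adjacent vertices u and v, ulμ(u)² ≤ ulμ(v) · μ. -/

import Mathlib

open Filter Topology

/-- The number of `n`-step self-avoiding walks in `G` starting at `v`. -/
noncomputable def sawCount {V : Type*} (G : SimpleGraph V) (v : V) (n : ℕ) : ℕ :=
  Nat.card {p : Σ u : V, G.Walk v u // p.2.IsPath ∧ p.2.length = n}

/-- The supremum over vertices of the number of `n`-step self-avoiding walks. -/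
noncomputable def sawSup {V : Type*} (G : SimpleGraph V) (n : ℕ) : ℕ :=
  sSup (Set.range fun v => sawCount G v n)

/-- `liminf_{n→∞} σ_n(w)^{1/n}`. -/
noncomputable def ulMu {V : Type*} (G : SimpleGraph V) (w : V) : ℝ :=
  Filter.liminf (fun n : ℕ => (sawCount G w n : ℝ) ^ (1 / (n : ℝ))) Filter.atTop


/-!
A self-avoiding walk of length `n` from `u` either avoids the neighbour `v`, and then prepending
the edge `vu` gives one of length `n + 1` from `v`, or it visits `v` after `l` steps and is then the
reverse of a self-avoiding walk from `v` of length `l` followed by one of length `n - l`. Hence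
`σ_n(u) ≤ σ_{n+1}(v) + ∑_l σ_l(v) σ_{n-l}(v)`. Take `n = 2N` along the `N` with
`σ_N(v) ≲ ulμ(v)^N`: in every term one of the two walks has length at least `N`, and
`σ_{N+k}(v) ≤ σ_N(v) · sup_w σ_k(w) ≲ ulμ(v)^N μ^k`, so every term, as well as `σ_{2N+1}(v)`, is
`≲ (ulμ(v) μ)^N`. The number of terms is polynomial in `N`, hence
`σ_{2N}(u)^{1/(2N)} ≲ (ulμ(v) μ)^{1/2}`.
-/

theorem Nat.card_sigma_le_mul {α : Type*} {β : α → Type*} [Finite α] [∀ a, Finite (β a)]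
    {B : ℕ} (hB : ∀ a, Nat.card (β a) ≤ B) : Nat.card (Σ a, β a) ≤ Nat.card α * B := by
  have := Fintype.ofFinite α
  rw [Nat.card_sigma, Nat.card_eq_fintype_card, ← smul_eq_mul, ← Finset.card_univ]
  exact Finset.sum_le_card_nsmul _ _ _ fun a _ => hB a

namespace SimpleGraph

variable {V : Type*}

abbrev SAW (G : SimpleGraph V) (v : V) (n : ℕ) : Type _ :=
  {p : Σ u : V, G.Walk v u // p.2.IsPath ∧ p.2.length = n}

variable {G : SimpleGraph V}

theorem Walk.eq_of_length_eq_one {u v : V} {p q : G.Walk u v} (hp : p.length = 1)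
    (hq : q.length = 1) : p = q := by
  rcases p with _ | ⟨h, _ | _⟩ <;> rcases q with _ | ⟨h', _ | _⟩ <;> simp_all

namespace SAW

instance {v : V} : Subsingleton (G.SAW v 0) := by
  constructor
  rintro ⟨⟨x, p⟩, -, hp⟩ ⟨⟨y, q⟩, -, hq⟩
  cases p with
  | nil => cases q with
    | nil => rfl
    | cons => simp at hq
  | cons => simp at hp

def toNeighbor {v : V} (P : G.SAW v 1) : G.neighborSet v :=
  ⟨P.1.1, Walk.adj_of_length_eq_one P.2.2⟩

theorem toNeighbor_injective (v : V) : Function.Injective (toNeighbor (G := G) (v := v)) := by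
  rintro ⟨⟨x, p⟩, _, hp⟩ ⟨⟨y, q⟩, _, hq⟩ hxy
  obtain rfl : x = y := congrArg Subtype.val hxy
  obtain rfl : p = q := Walk.eq_of_length_eq_one hp hq
  rfl

def splitAt {v : V} (m n : ℕ) (P : G.SAW v (m + n)) : Σ q : G.SAW v m, G.SAW q.1.1 n :=
  ⟨⟨⟨_, P.1.2.take m⟩, P.2.1.take m, by simp [P.2.2]⟩,
    ⟨⟨_, P.1.2.drop m⟩, P.2.1.drop m, by simp [P.2.2]⟩⟩

theorem splitAt_injective (v : V) (m n : ℕ) :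
    Function.Injective (splitAt (G := G) (v := v) m n) := by
  let join (t : Σ q : G.SAW v m, G.SAW q.1.1 n) : Σ u, G.Walk v u :=
    ⟨t.2.1.1, t.1.1.2.append t.2.1.2⟩
  have hjoin : join ∘ splitAt m n = fun P => P.1 := by
    funext P
    simp [join, splitAt, Walk.append_take_drop_eq]
  exact Function.Injective.of_comp (f := join) (hjoin ▸ Subtype.val_injective)

def consOfNotMem {u v : V} (h : G.Adj v u) {n : ℕ} (P : {P : G.SAW u n // v ∉ P.1.2.support}) :
    G.SAW v (n + 1) :=
  ⟨⟨P.1.1.1, Walk.cons h P.1.1.2⟩, (Walk.cons_isPath_iff h _).mpr ⟨P.1.2.1, P.2⟩, by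
    simp [P.1.2.2]⟩

theorem consOfNotMem_injective {u v : V} (h : G.Adj v u) (n : ℕ) :
    Function.Injective (consOfNotMem h (n := n)) := by
  rintro ⟨⟨⟨x, p⟩, _⟩, _⟩ ⟨⟨⟨y, q⟩, _⟩, _⟩ hpq
  simp only [consOfNotMem, Subtype.mk.injEq, Sigma.mk.inj_iff] at hpq
  obtain ⟨rfl, hpq⟩ := hpq
  simp_all

def splitAtVertex [DecidableEq V] {u v : V} {n : ℕ} (P : {P : G.SAW u n // v ∈ P.1.2.support}) :
    Σ l : Fin (n + 1), G.SAW v l × G.SAW v (n - l) :=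
  have hlen : (P.1.1.2.takeUntil v P.2).length + (P.1.1.2.dropUntil v P.2).length = n := by
    rw [← Walk.length_append, Walk.take_spec, P.1.2.2]
  ⟨⟨(P.1.1.2.takeUntil v P.2).length, by omega⟩,
    ⟨⟨u, (P.1.1.2.takeUntil v P.2).reverse⟩, (P.1.2.1.takeUntil P.2).reverse, by simp⟩,
    ⟨⟨P.1.1.1, P.1.1.2.dropUntil v P.2⟩, P.1.2.1.dropUntil P.2, by simp only; omega⟩⟩

theorem splitAtVertex_injective [DecidableEq V] (u v : V) (n : ℕ) :
    Function.Injective (splitAtVertex (G := G) (u := u) (v := v) (n := n)) := by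
  let join (t : Σ l : Fin (n + 1), G.SAW v l × G.SAW v (n - l)) : Σ a b, G.Walk a b :=
    ⟨t.2.1.1.1, t.2.2.1.1, t.2.1.1.2.reverse.append t.2.2.1.2⟩
  have hjoin : join ∘ splitAtVertex = fun P => ⟨u, P.1.1⟩ := by
    funext P
    simp [join, splitAtVertex]
  refine Function.Injective.of_comp (f := join) (hjoin ▸ ?_)
  exact sigma_mk_injective.comp (Subtype.val_injective.comp Subtype.val_injective)

variable [G.LocallyFinite]

instance (v : V) (n : ℕ) : Finite (G.SAW v n) := by
  induction n with
  | zero => infer_instance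
  | succ n ih =>
    have (w : V) : Finite (G.SAW w 1) := Finite.of_injective _ (toNeighbor_injective w)
    exact Finite.of_injective _ (splitAt_injective v n 1)

theorem card_one_le_degree (v : V) : Nat.card (G.SAW v 1) ≤ G.degree v := by
  rw [← card_neighborSet_eq_degree, ← Nat.card_eq_fintype_card]
  exact Nat.card_le_card_of_injective _ (toNeighbor_injective v)

theorem card_add_le_mul (v : V) (m n : ℕ) {B : ℕ} (hB : ∀ w, Nat.card (G.SAW w n) ≤ B) :
    Nat.card (G.SAW v (m + n)) ≤ Nat.card (G.SAW v m) * B :=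
  (Nat.card_le_card_of_injective _ (splitAt_injective v m n)).trans
    (Nat.card_sigma_le_mul fun _ => hB _)

end SAW

end SimpleGraph

open SimpleGraph

section BoundedDegree

variable {V : Type*} {G : SimpleGraph V} [G.LocallyFinite] {Δ : ℕ}

theorem sawCount_le_pow (hΔ : ∀ v, G.degree v ≤ Δ) (v : V) (n : ℕ) : sawCount G v n ≤ Δ ^ n := by
  induction n with
  | zero => exact Finite.card_le_one_iff_subsingleton.mpr inferInstance
  | succ n ih =>
    calc sawCount G v (n + 1) ≤ sawCount G v n * Δ :=
          SAW.card_add_le_mul v n 1 fun w => (SAW.card_one_le_degree w).trans (hΔ w)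
      _ ≤ Δ ^ (n + 1) := by rw [pow_succ]; exact Nat.mul_le_mul_right _ ih

theorem sawCount_le_sawSup (hΔ : ∀ v, G.degree v ≤ Δ) (v : V) (n : ℕ) :
    sawCount G v n ≤ sawSup G n :=
  le_csSup ⟨Δ ^ n, by rintro _ ⟨w, rfl⟩; exact sawCount_le_pow hΔ w n⟩ ⟨v, rfl⟩

theorem sawCount_add_le (hΔ : ∀ v, G.degree v ≤ Δ) (v : V) (m n : ℕ) :
    sawCount G v (m + n) ≤ sawCount G v m * sawSup G n :=
  SAW.card_add_le_mul v m n fun w => sawCount_le_sawSup hΔ w n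

end BoundedDegree

theorem sawCount_le_of_adj {V : Type*} {G : SimpleGraph V} [G.LocallyFinite] {u v : V}
    (h : G.Adj u v) (n : ℕ) :
    sawCount G u n ≤ sawCount G v (n + 1) +
      ∑ l ∈ Finset.range (n + 1), sawCount G v l * sawCount G v (n - l) := by
  classical
  have hinj := (Sum.map_injective.mpr ⟨SAW.splitAtVertex_injective u v n,
    SAW.consOfNotMem_injective h.symm n⟩).comp
      (Equiv.sumCompl fun P : G.SAW u n => v ∈ P.1.2.support).symm.injective
  have hcard := Nat.card_le_card_of_injective _ hinj
  rw [Nat.card_sum, Nat.card_sigma, Fin.sum_univ_eq_sum_range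
    (fun l => Nat.card (G.SAW v l × G.SAW v (n - l)))] at hcard
  simp only [Nat.card_prod] at hcard
  exact hcard.trans_eq (add_comm _ _)

noncomputable def rootSeq (x : ℕ → ℕ) (n : ℕ) : ℝ := (x n : ℝ) ^ (1 / (n : ℝ))

section RootSeq

variable {x s : ℕ → ℕ} {μ : ℝ}

theorem rootSeq_nonneg (x : ℕ → ℕ) (n : ℕ) : 0 ≤ rootSeq x n :=
  Real.rpow_nonneg (Nat.cast_nonneg _) _

theorem rootSeq_le_iff {n : ℕ} (hn : n ≠ 0) {c : ℝ} (hc : 0 ≤ c) :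
    rootSeq x n ≤ c ↔ (x n : ℝ) ≤ c ^ n := by
  rw [rootSeq, one_div, Real.rpow_inv_le_iff_of_pos (Nat.cast_nonneg _) hc (by positivity),
    Real.rpow_natCast]

theorem rootSeq_le_rootSeq {n : ℕ} (h : x n ≤ s n) : rootSeq x n ≤ rootSeq s n :=
  Real.rpow_le_rpow (Nat.cast_nonneg _) (Nat.cast_le.mpr h) (by positivity)

theorem isCoboundedUnder_ge_rootSeq (hs : Tendsto (rootSeq s) atTop (𝓝 μ)) (hxs : ∀ n, x n ≤ s n) :
    IsCoboundedUnder (· ≥ ·) atTop (rootSeq x) := by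
  obtain ⟨M, hM⟩ := hs.bddAbove_range
  exact isCoboundedUnder_ge_of_le atTop fun n => (rootSeq_le_rootSeq (hxs n)).trans (hM ⟨n, rfl⟩)

theorem liminf_rootSeq_nonneg (h : IsCoboundedUnder (· ≥ ·) atTop (rootSeq x)) :
    0 ≤ liminf (rootSeq x) atTop :=
  le_liminf_of_le h (Eventually.of_forall (rootSeq_nonneg x))

theorem exists_le_mul_pow_of_tendsto_rootSeq (hs : Tendsto (rootSeq s) atTop (𝓝 μ)) {r : ℝ}
    (hr : μ < r) : ∃ C, ∀ n, (s n : ℝ) ≤ C * r ^ n := by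
  have hr0 : 0 < r := (ge_of_tendsto' hs (rootSeq_nonneg s)).trans_lt hr
  have hratio : ∀ᶠ n in atTop, (s n : ℝ) / r ^ n ≤ 1 :=
    ((hs.eventually (gt_mem_nhds hr)).and (eventually_ne_atTop 0)).mono fun n ⟨hn, hn0⟩ =>
      (div_le_one (by positivity)).mpr ((rootSeq_le_iff hn0 hr0.le).mp hn.le)
  obtain ⟨C, hC⟩ := (isBoundedUnder_of_eventually_le hratio).bddAbove_range
  exact ⟨C, fun n => (div_le_iff₀ (by positivity)).mp (hC ⟨n, rfl⟩)⟩

theorem frequently_le_pow_of_liminf_rootSeq_lt (h : IsCoboundedUnder (· ≥ ·) atTop (rootSeq x))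
    {c : ℝ} (hc : liminf (rootSeq x) atTop < c) : ∃ᶠ n in atTop, (x n : ℝ) ≤ c ^ n :=
  ((frequently_lt_of_liminf_lt h hc).and_eventually (eventually_ne_atTop 0)).mono
    fun n ⟨hn, hn0⟩ => (rootSeq_le_iff hn0 ((rootSeq_nonneg x n).trans hn.le)).mp hn.le

theorem liminf_rootSeq_le_of_frequently {c₀ : ℝ} (hc₀ : 0 ≤ c₀)
    (h : ∀ c > c₀, ∃ᶠ n in atTop, (x n : ℝ) ≤ c ^ n) : liminf (rootSeq x) atTop ≤ c₀ :=
  le_of_forall_gt_imp_ge_of_dense fun c hc => liminf_le_of_frequently_le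
    (((h c hc).and_eventually (eventually_ne_atTop 0)).mono fun _ ⟨hn, hn0⟩ =>
      (rootSeq_le_iff hn0 (hc₀.trans hc.le)).mpr hn)
    (isBoundedUnder_of ⟨0, rootSeq_nonneg x⟩)

end RootSeq

theorem eventually_mul_pow_le_pow {A B T T' : ℝ} (hT : 0 ≤ T) (hTT' : T < T') :
    ∀ᶠ N : ℕ in atTop, (A + B * N) * T ^ N ≤ T' ^ N := by
  have hT' : 0 < T' := hT.trans_lt hTT'
  have hq : T / T' < 1 := (div_lt_one hT').mpr hTT'
  have hq0 : 0 ≤ T / T' := div_nonneg hT hT'.le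
  have hlim : Tendsto (fun N : ℕ => A * (T / T') ^ N + B * (N * (T / T') ^ N)) atTop (𝓝 0) := by
    simpa using ((tendsto_pow_atTop_nhds_zero_of_lt_one hq0 hq).const_mul A).add
      ((tendsto_self_mul_const_pow_of_lt_one hq0 hq).const_mul B)
  filter_upwards [hlim.eventually (gt_mem_nhds one_pos)] with N hN
  have hsplit : (A + B * N) * T ^ N = (A * (T / T') ^ N + B * (N * (T / T') ^ N)) * T' ^ N := by
    rw [div_pow]; field_simp
  rw [hsplit]
  exact mul_le_of_le_one_left (by positivity) hN.le

section Split

variable {a b s : ℕ → ℕ}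

theorem cast_apply_two_mul_le_of_split (hbs : ∀ n, b n ≤ s n) (hbmul : ∀ m n, b (m + n) ≤ b m * s n)
    (hab : ∀ n, a n ≤ b (n + 1) + ∑ l ∈ Finset.range (n + 1), b l * b (n - l))
    {C r lam : ℝ} (hC : ∀ n, (s n : ℝ) ≤ C * r ^ n) {N : ℕ} (hN : (b N : ℝ) ≤ lam ^ N) :
    (a (2 * N) : ℝ) ≤ (C * r + C ^ 2 + 2 * C ^ 2 * N) * (lam * r) ^ N := by
  have hnear (l : ℕ) : (b l : ℝ) ≤ C * r ^ l := (Nat.cast_le.mpr (hbs l)).trans (hC l)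
  have hfar (k : ℕ) : (b (N + k) : ℝ) ≤ C * r ^ k * lam ^ N :=
    calc (b (N + k) : ℝ) ≤ b N * s k := by exact_mod_cast hbmul N k
      _ ≤ lam ^ N * (C * r ^ k) :=
        mul_le_mul hN (hC k) (Nat.cast_nonneg _) ((Nat.cast_nonneg _).trans hN)
      _ = C * r ^ k * lam ^ N := by ring
  have hpair (i k : ℕ) (hik : i + k = N) : (b i : ℝ) * b (N + k) ≤ C ^ 2 * (lam * r) ^ N :=
    calc (b i : ℝ) * b (N + k) ≤ (C * r ^ i) * (C * r ^ k * lam ^ N) :=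
          mul_le_mul (hnear i) (hfar k) (Nat.cast_nonneg _) ((Nat.cast_nonneg _).trans (hnear i))
      _ = C ^ 2 * (lam * r) ^ N := by rw [← hik]; ring
  have hterm : ∀ l ∈ Finset.range (2 * N + 1),
      (b l : ℝ) * b (2 * N - l) ≤ C ^ 2 * (lam * r) ^ N := by
    intro l hl
    rw [Finset.mem_range] at hl
    rcases le_total l N with hlN | hNl
    · simpa only [show N + (N - l) = 2 * N - l by omega] using hpair l (N - l) (by omega)
    · simpa only [show N + (l - N) = l by omega, mul_comm] using
        hpair (2 * N - l) (l - N) (by omega)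
  have hlast : (b (2 * N + 1) : ℝ) ≤ C * r * (lam * r) ^ N :=
    calc (b (2 * N + 1) : ℝ) = b (N + (N + 1)) := by rw [show N + (N + 1) = 2 * N + 1 by omega]
      _ ≤ C * r ^ (N + 1) * lam ^ N := hfar (N + 1)
      _ = C * r * (lam * r) ^ N := by ring
  calc (a (2 * N) : ℝ)
      ≤ b (2 * N + 1) + ∑ l ∈ Finset.range (2 * N + 1), (b l : ℝ) * b (2 * N - l) := by
        exact_mod_cast hab (2 * N)
    _ ≤ C * r * (lam * r) ^ N + (2 * N + 1) • (C ^ 2 * (lam * r) ^ N) := by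
        refine add_le_add hlast ?_
        simpa using Finset.sum_le_card_nsmul _ _ _ hterm
    _ = (C * r + C ^ 2 + 2 * C ^ 2 * N) * (lam * r) ^ N := by
        rw [nsmul_eq_mul]; push_cast; ring

theorem sq_liminf_rootSeq_le_of_split {μ : ℝ} (hs : Tendsto (rootSeq s) atTop (𝓝 μ))
    (has : ∀ n, a n ≤ s n) (hbs : ∀ n, b n ≤ s n) (hbmul : ∀ m n, b (m + n) ≤ b m * s n)
    (hab : ∀ n, a n ≤ b (n + 1) + ∑ l ∈ Finset.range (n + 1), b l * b (n - l)) :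
    liminf (rootSeq a) atTop ^ 2 ≤ liminf (rootSeq b) atTop * μ := by
  have ha := isCoboundedUnder_ge_rootSeq hs has
  have hb := isCoboundedUnder_ge_rootSeq hs hbs
  have hμ : 0 ≤ μ := ge_of_tendsto' hs (rootSeq_nonneg s)
  refine le_mul_of_forall_lt₀ fun lam hlam r hr => ?_
  obtain ⟨C, hC⟩ := exists_le_mul_pow_of_tendsto_rootSeq hs hr
  have hT : 0 ≤ lam * r :=
    mul_nonneg ((liminf_rootSeq_nonneg hb).trans hlam.le) (hμ.trans hr.le)
  suffices liminf (rootSeq a) atTop ≤ √(lam * r) by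
    simpa [Real.sq_sqrt hT] using pow_le_pow_left₀ (liminf_rootSeq_nonneg ha) this 2
  refine liminf_rootSeq_le_of_frequently (Real.sqrt_nonneg _) fun c hc => ?_
  have hc2 : lam * r < c ^ 2 := (Real.sqrt_lt' ((Real.sqrt_nonneg _).trans_lt hc)).mp hc
  have hfreq : ∃ᶠ N in atTop, (a (2 * N) : ℝ) ≤ c ^ (2 * N) :=
    ((frequently_le_pow_of_liminf_rootSeq_lt hb hlam).and_eventually
      (eventually_mul_pow_le_pow (A := C * r + C ^ 2) (B := 2 * C ^ 2) hT hc2)).mono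
      fun N ⟨hN, hpoly⟩ =>
        (cast_apply_two_mul_le_of_split hbs hbmul hab hC hN).trans (pow_mul c 2 N ▸ hpoly)
  exact (tendsto_id.const_mul_atTop' two_pos).frequently hfreq

end Split

theorem ulMu_sq_le_adj_general
    {V : Type*} (G : SimpleGraph V) (Δ : ℕ)
    (hdeg : ∀ v : V, (G.neighborSet v).Finite ∧ (G.neighborSet v).ncard ≤ Δ)
    (μ : ℝ)
    (hμ : Filter.Tendsto (fun n : ℕ => (sawSup G n : ℝ) ^ (1 / (n : ℝ)))
      Filter.atTop (nhds μ)) :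
    ∀ u v : V, G.Adj u v → (ulMu G u) ^ 2 ≤ ulMu G v * μ := by
  intro u v huv
  let : G.LocallyFinite := fun v => (hdeg v).1.fintype
  have hΔ (w : V) : G.degree w ≤ Δ := by
    rw [← card_neighborSet_eq_degree, ← Nat.card_eq_fintype_card, Nat.card_coe_set_eq]
    exact (hdeg w).2
  exact sq_liminf_rootSeq_le_of_split hμ (sawCount_le_sawSup hΔ u) (sawCount_le_sawSup hΔ v)
    (sawCount_add_le hΔ v) (sawCount_le_of_adj huv)

theorem ulMu_sq_le_adj
    {V : Type*} (G : SimpleGraph V) (Δ : ℕ)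
    (hinf : Infinite V) (hconn : G.Connected)
    (hdeg : ∀ v : V, (G.neighborSet v).Finite ∧ (G.neighborSet v).ncard ≤ Δ)
    (μ : ℝ)
    (hμ : Filter.Tendsto (fun n : ℕ => (sawSup G n : ℝ) ^ (1 / (n : ℝ)))
      Filter.atTop (nhds μ)) :
    ∀ u v : V, G.Adj u v → (ulMu G u) ^ 2 ≤ ulMu G v * μ :=
  ulMu_sq_le_adj_general G Δ hdeg μ hμ
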